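/- Suppose the homogeneous action-degree structure is as follows: g^{(j)} has only monomials of action-degree with the same parity as j (degree j pure-action terms, and angle-dependent terms of action degrees j−2, j−4, …, down to 0 or 1). If the generating function χ is purely trigonometric (action degree 0) then L_χ maps a term of action degree d and 'order index' j to one of action degree d−1, i.e. it flips the parity of the action degree; if χ is homogeneous of action degree 1, L_χ preserves the action degree and hence the parity. Consequently, in the normalization algorithm alternating action-degree-0 and action-degree-1 generating functions, every function g^{(j,r)} at any normalization step r retains the parity structure: even j contains only even action degrees, odd j only odd action degrees. -/

import Mathlib

/-!
Differentiating a monomial in an action lowers its action degree by one, and differentiating it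
in an angle keeps it, so every term of the bracket of monomials of action degrees `a` and `b` has
action degree `a + b - 1`. With `b = 0` this flips the parity, with `b = 1` it preserves it, and
bilinearity of the bracket on finite Fourier–Taylor sums carries this over to `f` and `χ`.
-/

/-- Poisson bracket for canonical pairs (P,p), (Q,q) of functions of (P,Q,p,q). -/
noncomputable def pb (F G : ℝ → ℝ → ℝ → ℝ → ℂ) : ℝ → ℝ → ℝ → ℝ → ℂ :=
  fun P Q p q =>
    deriv (fun x => F P Q x q) p * deriv (fun x => G x Q p q) P
  - deriv (fun x => F x Q p q) P * deriv (fun x => G P Q x q) p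
  + deriv (fun x => F P Q p x) q * deriv (fun x => G P x p q) Q
  - deriv (fun x => F P x p q) Q * deriv (fun x => G P Q p x) q

/-- A Fourier–Taylor monomial P^l₁ Q^l₂ e^{i(k₁ p + k₂ q)}. -/
noncomputable def monom (l : ℕ × ℕ) (k : ℤ × ℤ) : ℝ → ℝ → ℝ → ℝ → ℂ :=
  fun P Q p q => (P : ℂ) ^ l.1 * (Q : ℂ) ^ l.2 *
    Complex.exp (Complex.I * ((k.1 : ℂ) * (p : ℂ) + (k.2 : ℂ) * (q : ℂ)))

open Complex Finset

section Derivatives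

variable (l : ℕ × ℕ) (k : ℤ × ℤ) (P Q p q : ℝ)

theorem hasDerivAt_monom_P :
    HasDerivAt (fun x : ℝ => monom l k x Q p q) (l.1 * monom (l.1 - 1, l.2) k P Q p q) P := by
  have h := ((hasDerivAt_pow l.1 (P : ℂ)).mul_const
    ((Q : ℂ) ^ l.2 * exp (I * (k.1 * p + k.2 * q)))).comp_ofReal
  convert h using 1
  · funext x; simp only [monom]; ring
  · simp only [monom]; ring

theorem hasDerivAt_monom_Q :
    HasDerivAt (fun x : ℝ => monom l k P x p q) (l.2 * monom (l.1, l.2 - 1) k P Q p q) Q := by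
  have h := (((hasDerivAt_pow l.2 (Q : ℂ)).const_mul ((P : ℂ) ^ l.1)).mul_const
    (exp (I * (k.1 * p + k.2 * q)))).comp_ofReal
  exact h.congr_deriv (by simp only [monom]; ring)

theorem hasDerivAt_monom_p :
    HasDerivAt (fun x : ℝ => monom l k P Q x q) (I * k.1 * monom l k P Q p q) p := by
  have h := ((((hasDerivAt_id' (p : ℂ)).const_mul (k.1 : ℂ)).add_const ((k.2 : ℂ) * q)).const_mul
    I).cexp.comp_ofReal.const_mul ((P : ℂ) ^ l.1 * (Q : ℂ) ^ l.2)
  exact h.congr_deriv (by simp only [monom]; ring)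

theorem hasDerivAt_monom_q :
    HasDerivAt (fun x : ℝ => monom l k P Q p x) (I * k.2 * monom l k P Q p q) q := by
  have h := ((((hasDerivAt_id' (q : ℂ)).const_mul (k.2 : ℂ)).const_add ((k.1 : ℂ) * p)).const_mul
    I).cexp.comp_ofReal.const_mul ((P : ℂ) ^ l.1 * (Q : ℂ) ^ l.2)
  exact h.congr_deriv (by simp only [monom]; ring)

end Derivatives

theorem deriv_sum_const_mul {ι : Type*} (s : Finset ι) (a : ι → ℂ) (f : ι → ℝ → ℂ) (x : ℝ)
    (hf : ∀ i, DifferentiableAt ℝ (f i) x) :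
    deriv (fun y => ∑ i ∈ s, a i * f i y) x = ∑ i ∈ s, a i * deriv (f i) x := by
  rw [deriv_fun_sum fun i _ => (hf i).const_mul (a i)]
  exact sum_congr rfl fun i _ => deriv_const_mul (a i) (hf i)

theorem pb_sum_sum {ι κ : Type*} (s : Finset ι) (t : Finset κ) (a : ι → ℂ) (b : κ → ℂ)
    (L : ι → ℕ × ℕ) (K : ι → ℤ × ℤ) (L' : κ → ℕ × ℕ) (K' : κ → ℤ × ℤ) :
    pb (fun P Q p q => ∑ i ∈ s, a i * monom (L i) (K i) P Q p q)
        (fun P Q p q => ∑ j ∈ t, b j * monom (L' j) (K' j) P Q p q) =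
      ∑ i ∈ s, ∑ j ∈ t, (a i * b j) • pb (monom (L i) (K i)) (monom (L' j) (K' j)) := by
  funext P Q p q
  simp only [pb, Finset.sum_apply, Pi.smul_apply, smul_eq_mul]
  simp only [deriv_sum_const_mul _ _ _ _ fun i => (hasDerivAt_monom_P _ _ _ _ _ _).differentiableAt,
    deriv_sum_const_mul _ _ _ _ fun i => (hasDerivAt_monom_Q _ _ _ _ _ _).differentiableAt,
    deriv_sum_const_mul _ _ _ _ fun i => (hasDerivAt_monom_p _ _ _ _ _ _).differentiableAt,
    deriv_sum_const_mul _ _ _ _ fun i => (hasDerivAt_monom_q _ _ _ _ _ _).differentiableAt,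
    sum_mul_sum, ← sum_sub_distrib, ← sum_add_distrib]
  refine sum_congr rfl fun i _ => sum_congr rfl fun j _ => ?_
  ring

theorem pb_monom (l l' : ℕ × ℕ) (k k' : ℤ × ℤ) :
    pb (monom l k) (monom l' k') =
      ((l'.1 : ℂ) * (I * k.1)) • monom (l.1 + (l'.1 - 1), l.2 + l'.2) (k + k')
      - ((l.1 : ℂ) * (I * k'.1)) • monom (l.1 - 1 + l'.1, l.2 + l'.2) (k + k')
      + ((l'.2 : ℂ) * (I * k.2)) • monom (l.1 + l'.1, l.2 + (l'.2 - 1)) (k + k')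
      - ((l.2 : ℂ) * (I * k'.2)) • monom (l.1 + l'.1, l.2 - 1 + l'.2) (k + k') := by
  funext P Q p q
  simp only [pb, (hasDerivAt_monom_P _ _ _ _ _ _).deriv, (hasDerivAt_monom_Q _ _ _ _ _ _).deriv,
    (hasDerivAt_monom_p _ _ _ _ _ _).deriv, (hasDerivAt_monom_q _ _ _ _ _ _).deriv]
  simp only [Pi.add_apply, Pi.sub_apply, Pi.smul_apply, smul_eq_mul, monom, pow_add,
    Prod.fst_add, Prod.snd_add, Int.cast_add]
  rw [show I * ((k.1 + k'.1 : ℂ) * p + (k.2 + k'.2 : ℂ) * q)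
      = I * (k.1 * p + k.2 * q) + I * (k'.1 * p + k'.2 * q) by ring, exp_add]
  ring

def actionParitySpan (m : ℕ) : Submodule ℂ (ℝ → ℝ → ℝ → ℝ → ℂ) :=
  Submodule.span ℂ ((fun lk : (ℕ × ℕ) × (ℤ × ℤ) => monom lk.1 lk.2) ''
    {lk | (lk.1.1 + lk.1.2) % 2 = m % 2})

theorem exists_sum_monom_of_mem_actionParitySpan {m : ℕ} {F : ℝ → ℝ → ℝ → ℝ → ℂ}
    (hF : F ∈ actionParitySpan m) :
    ∃ (S : Finset ((ℕ × ℕ) × (ℤ × ℤ))) (d : (ℕ × ℕ) × (ℤ × ℤ) → ℂ),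
      (∀ lk ∈ S, (lk.1.1 + lk.1.2) % 2 = m % 2) ∧
      F = fun P Q p q => ∑ lk ∈ S, d lk * monom lk.1 lk.2 P Q p q := by
  obtain ⟨d, hd, rfl⟩ := (Finsupp.mem_span_image_iff_linearCombination ℂ).1 hF
  refine ⟨d.support, d, fun lk hlk => hd hlk, ?_⟩
  funext P Q p q
  simp [Finsupp.linearCombination_apply, Finsupp.sum, Finset.sum_apply]

theorem natCast_mul_smul_monom_mem_actionParitySpan {m n : ℕ} (a : ℂ) (l : ℕ × ℕ) (k : ℤ × ℤ)
    (h : n ≠ 0 → (l.1 + l.2) % 2 = m % 2) :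
    ((n : ℂ) * a) • monom l k ∈ actionParitySpan m := by
  rcases eq_or_ne n 0 with rfl | hn
  · simp
  · exact Submodule.smul_mem _ _ (Submodule.subset_span ⟨(l, k), h hn, rfl⟩)

/-- Every term of `pb_monom` has action degree `|l| + |l'| - 1`: a truncated exponent `l.1 - 1`
only occurs with the coefficient `l.1`, which then vanishes. -/
theorem pb_monom_mem_actionParitySpan {m : ℕ} (l l' : ℕ × ℕ) (k k' : ℤ × ℤ)
    (h : (l.1 + l.2 + (l'.1 + l'.2) + 1) % 2 = m % 2) :
    pb (monom l k) (monom l' k') ∈ actionParitySpan m := by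
  rw [pb_monom]
  refine sub_mem (add_mem (sub_mem ?_ ?_) ?_) ?_ <;>
    exact natCast_mul_smul_monom_mem_actionParitySpan _ _ _ fun hn => by simp only; omega

theorem pb_sum_monom_mem_actionParitySpan {ι κ : Type*} {m : ℕ} (s : Finset ι) (t : Finset κ)
    (a : ι → ℂ) (b : κ → ℂ) (L : ι → ℕ × ℕ) (K : ι → ℤ × ℤ) (L' : κ → ℕ × ℕ) (K' : κ → ℤ × ℤ)
    (h : ∀ i ∈ s, ∀ j ∈ t, ((L i).1 + (L i).2 + ((L' j).1 + (L' j).2) + 1) % 2 = m % 2) :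
    pb (fun P Q p q => ∑ i ∈ s, a i * monom (L i) (K i) P Q p q)
        (fun P Q p q => ∑ j ∈ t, b j * monom (L' j) (K' j) P Q p q) ∈ actionParitySpan m := by
  rw [pb_sum_sum]
  exact Submodule.sum_mem _ fun i hi => Submodule.sum_mem _ fun j hj =>
    Submodule.smul_mem _ _ (pb_monom_mem_actionParitySpan _ _ _ _ (h i hi j hj))

/-- parity structure of the normalization algorithm. If f contains
only monomials whose action degree has the parity of j, then L_χ with a purely
trigonometric χ (action degree 0) flips the parity of the action degrees, while
L_χ with a χ homogeneous of action degree 1 preserves it. Hence the alternating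
algorithm (trig generating functions at odd steps, degree-1 at even steps)
preserves the parity structure of every g^{(j,r)}. -/
theorem stmt16 (j : ℕ)
    (Sf : Finset ((ℕ × ℕ) × (ℤ × ℤ))) (c : (ℕ × ℕ) × (ℤ × ℤ) → ℂ)
    (hfpar : ∀ lk ∈ Sf, (lk.1.1 + lk.1.2) % 2 = j % 2)
    (Sχ₀ : Finset (ℤ × ℤ)) (x₀ : ℤ × ℤ → ℂ)
    (Sχ₁ : Finset ((ℕ × ℕ) × (ℤ × ℤ))) (x₁ : (ℕ × ℕ) × (ℤ × ℤ) → ℂ)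
    (hχ₁deg : ∀ lk ∈ Sχ₁, lk.1.1 + lk.1.2 = 1)
    (f χ₀ χ₁ : ℝ → ℝ → ℝ → ℝ → ℂ)
    (hf : f = fun P Q p q => ∑ lk ∈ Sf, c lk * monom lk.1 lk.2 P Q p q)
    (hχ₀ : χ₀ = fun P Q p q => ∑ k ∈ Sχ₀, x₀ k * monom (0, 0) k P Q p q)
    (hχ₁ : χ₁ = fun P Q p q => ∑ lk ∈ Sχ₁, x₁ lk * monom lk.1 lk.2 P Q p q) :
    (∃ (S : Finset ((ℕ × ℕ) × (ℤ × ℤ))) (d : (ℕ × ℕ) × (ℤ × ℤ) → ℂ),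
      (∀ lk ∈ S, (lk.1.1 + lk.1.2) % 2 = (j + 1) % 2) ∧
      pb f χ₀ = fun P Q p q => ∑ lk ∈ S, d lk * monom lk.1 lk.2 P Q p q) ∧
    (∃ (S : Finset ((ℕ × ℕ) × (ℤ × ℤ))) (d : (ℕ × ℕ) × (ℤ × ℤ) → ℂ),
      (∀ lk ∈ S, (lk.1.1 + lk.1.2) % 2 = j % 2) ∧
      pb f χ₁ = fun P Q p q => ∑ lk ∈ S, d lk * monom lk.1 lk.2 P Q p q) := by
  subst hf hχ₀ hχ₁
  refine ⟨exists_sum_monom_of_mem_actionParitySpan ?_, exists_sum_monom_of_mem_actionParitySpan ?_⟩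
  · exact pb_sum_monom_mem_actionParitySpan Sf Sχ₀ c x₀ Prod.fst Prod.snd (fun _ => (0, 0)) id
      fun lk hlk _ _ => by have := hfpar lk hlk; omega
  · exact pb_sum_monom_mem_actionParitySpan Sf Sχ₁ c x₁ Prod.fst Prod.snd Prod.fst Prod.snd
      fun lk hlk lk' hlk' => by have := hfpar lk hlk; have := hχ₁deg lk' hlk'; omega
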